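/- arXiv:1501.01259 — 2 statements merged into one kernel-verified Lean document; each statement's English description precedes it below -/
import Mathlib

section
/- Let X be a cell complex such that every 1-cell is adjacent to only finitely many 2-cells, and suppose FV_{X,ℤ}(k) < ∞ for every integer k. Then the 1-skeleton of X is a fine graph: for every edge e and every L > 0, there are only finitely many circuits of length at most L containing e. -/
open Finsupp

/-- A (combinatorial, oriented) graph: the 1-skeleton data of a complex. -/
structure CGraph where
  V : Type
  E : Type
  ends : E → V × V

/-- ℓ¹-norm of an integral chain. -/
def l1Z {α : Type} (c : α →₀ ℤ) : ℕ := c.sum fun _ v => v.natAbs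

/-- Two chains are disjoint if no basis element has nonzero coefficient in both. -/
def DisjointChains {α : Type} (a b : α →₀ ℤ) : Prop := ∀ x, a x = 0 ∨ b x = 0

namespace CGraph

variable (Γ : CGraph)

/-- Source vertex of a directed edge (an edge with an orientation bit). -/
def src (p : Γ.E × Bool) : Γ.V := if p.2 then (Γ.ends p.1).1 else (Γ.ends p.1).2

/-- Target vertex of a directed edge. -/
def tgt (p : Γ.E × Bool) : Γ.V := if p.2 then (Γ.ends p.1).2 else (Γ.ends p.1).1

/-- A nonempty cyclically-consecutive list of directed edges. -/
def IsClosedPath (l : List (Γ.E × Bool)) : Prop :=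
  l ≠ [] ∧ ∀ i : Fin l.length,
    Γ.tgt (l.get i) = Γ.src (l.get ⟨(↑i + 1) % l.length, Nat.mod_lt _ i.pos⟩)

/-- A circuit: a simple closed combinatorial path (no repeated edges or vertices). -/
def IsCircuit (l : List (Γ.E × Bool)) : Prop :=
  Γ.IsClosedPath l ∧ (l.map Prod.fst).Nodup ∧ (l.map Γ.src).Nodup

/-- The 1-cycle induced by a closed path: coefficient ±1 on each traversed edge. -/
noncomputable def pathCycle (l : List (Γ.E × Bool)) : Γ.E →₀ ℤ :=
  (l.map fun p => Finsupp.single p.1 (if p.2 then (1 : ℤ) else -1)).sum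

/-- The simplicial boundary map `C₁ → C₀`. -/
noncomputable def d1 (γ : Γ.E →₀ ℤ) : Γ.V →₀ ℤ :=
  γ.sum fun e c => c • (Finsupp.single (Γ.ends e).2 (1 : ℤ) - Finsupp.single (Γ.ends e).1 1)

/-- A 1-chain is a cycle if its boundary vanishes. -/
def IsCycle (γ : Γ.E →₀ ℤ) : Prop := Γ.d1 γ = 0

/-- A graph is fine if each edge lies in only finitely many circuits of each bounded length. -/
def Fine : Prop :=
  ∀ (e : Γ.E) (L : ℕ),
    {l : List (Γ.E × Bool) | Γ.IsCircuit l ∧ e ∈ l.map Prod.fst ∧ l.length ≤ L}.Finite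

/-- Walks from `u` to `v`. -/
def IsWalk : List (Γ.E × Bool) → Γ.V → Γ.V → Prop
  | [], u, v => u = v
  | p :: l, u, v => Γ.src p = u ∧ IsWalk l (Γ.tgt p) v

/-- Combinatorial distance in a graph (∞ if there is no walk). -/
noncomputable def gdist (u v : Γ.V) : ℕ∞ :=
  ⨅ l ∈ {l : List (Γ.E × Bool) | Γ.IsWalk l u v}, (l.length : ℕ∞)

def Connected : Prop := ∀ u v : Γ.V, Γ.gdist u v < ⊤

/-- Gromov hyperbolicity via the four-point condition. -/
def Hyperbolic : Prop :=
  ∃ δ : ℕ, ∀ x y z w : Γ.V,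
    Γ.gdist x y + Γ.gdist z w ≤
      max (Γ.gdist x z + Γ.gdist y w) (Γ.gdist x w + Γ.gdist y z) + (δ : ℕ∞)

end CGraph

/-- A combinatorial 2-complex: a graph together with a set of 2-cells, each with a
boundary 1-chain. -/
structure TwoComplex extends CGraph where
  F : Type
  fb : F → E →₀ ℤ

namespace TwoComplex

variable (X : TwoComplex)

/-- The boundary map `C₂ → C₁` over ℤ. -/
noncomputable def d2 (μ : X.F →₀ ℤ) : X.E →₀ ℤ := μ.sum fun f c => c • X.fb f

/-- The filling norm `‖γ‖_∂` over ℤ (∞ if `γ` bounds no 2-chain). -/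
noncomputable def fillNorm (γ : X.E →₀ ℤ) : ℕ∞ :=
  ⨅ μ ∈ {μ : X.F →₀ ℤ | X.d2 μ = γ}, (l1Z μ : ℕ∞)

/-- The homological Dehn function of `X` over ℤ. -/
noncomputable def FV (k : ℕ) : ℕ∞ :=
  ⨆ γ ∈ {γ : X.E →₀ ℤ | X.toCGraph.IsCycle γ ∧ l1Z γ ≤ k}, X.fillNorm γ

end TwoComplex


/-!
Fix an edge `e` and a length `L`, and let `M = FV(L)`. A circuit `c` through `e` of length at
most `L` bounds a 2-chain `μ` with `‖μ‖₁ ≤ M`. Keep only the faces of `μ` that are linked to `e`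
by a chain of faces of `μ`, consecutive ones sharing an edge: their boundary is disjoint from the
boundary of the remaining faces, so it is a subcycle of `c` which is nonzero at `e`. A circuit
has no proper nonzero subcycle, hence every edge of `c` lies on one of these faces. They are all
within `M` adjacency steps of the finitely many faces at `e`, and since every edge lies on only
finitely many faces, this is a finite set of faces that does not depend on `c`. So the circuits in
question have bounded length and use edges from a fixed finite set.
-/

section reachIn

variable {α : Type*}

def reachIn (r : α → α → Prop) (s : Set α) : ℕ → Set α
  | 0 => s
  | n + 1 => reachIn r s n ∪ {y | ∃ x ∈ reachIn r s n, r x y}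

variable {r r' : α → α → Prop} {s s' t : Set α}

lemma monotone_reachIn : Monotone (reachIn r s) :=
  monotone_nat_of_le_succ fun _ => Set.subset_union_left

lemma reachIn_mono (hr : r ≤ r') (hs : s ⊆ s') : ∀ n, reachIn r s n ⊆ reachIn r' s' n
  | 0 => hs
  | n + 1 => Set.union_subset_union (reachIn_mono hr hs n)
      fun _ ⟨x, hx, hxy⟩ => ⟨x, reachIn_mono hr hs n hx, hr _ _ hxy⟩

lemma reachIn_finite (hs : s.Finite) (hr : ∀ x, {y | r x y}.Finite) :
    ∀ n, (reachIn r s n).Finite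
  | 0 => hs
  | n + 1 => (reachIn_finite hs hr n).union <|
      ((reachIn_finite hs hr n).biUnion fun x _ => hr x).subset
        fun _ ⟨_, hx, hxy⟩ => Set.mem_biUnion hx hxy

lemma reachIn_subset (hs : s ⊆ t) (hr : ∀ x y, r x y → y ∈ t) : ∀ n, reachIn r s n ⊆ t
  | 0 => hs
  | n + 1 => Set.union_subset (reachIn_subset hs hr n) fun _ ⟨x, _, hxy⟩ => hr x _ hxy

/-- Inside a finite set `t`, the sets `reachIn r s n` grow strictly only for `t.ncard` steps. -/
lemma reachIn_ncard_succ (ht : t.Finite) (hsub : ∀ n, reachIn r s n ⊆ t) :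
    reachIn r s (t.ncard + 1) = reachIn r s t.ncard := by
  obtain ⟨k, hk, hstab⟩ : ∃ k ≤ t.ncard, reachIn r s (k + 1) = reachIn r s k := by
    by_contra! hgrow
    have hcard : ∀ k ≤ t.ncard + 1, k ≤ (reachIn r s k).ncard := by
      intro k
      induction k with
      | zero => exact fun _ => Nat.zero_le _
      | succ k ih =>
        intro hk
        have hlt := Set.ncard_lt_ncard
          ((monotone_reachIn (Nat.le_add_right k 1)).ssubset_of_ne (hgrow k (by omega)).symm)
          (ht.subset (hsub _))
        have := ih (by omega)
        omega
    have := (hcard _ le_rfl).trans (Set.ncard_le_ncard (hsub _) ht)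
    omega
  have hconst : ∀ n, k ≤ n → reachIn r s n = reachIn r s k := by
    intro n hn
    induction n, hn using Nat.le_induction with
    | base => rfl
    | succ n _ ih =>
      rw [← hstab]
      show reachIn r s n ∪ _ = reachIn r s k ∪ _
      rw [ih]
  rw [hconst _ (by omega), hconst _ hk]

lemma mem_reachIn_ncard_of_rel (ht : t.Finite) (hsub : ∀ n, reachIn r s n ⊆ t) {x y : α}
    (hx : x ∈ reachIn r s t.ncard) (hxy : r x y) : y ∈ reachIn r s t.ncard :=
  reachIn_ncard_succ ht hsub ▸ Or.inr ⟨x, hx, hxy⟩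

end reachIn

open Fin.NatCast in
lemma Fin.exists_and_not_add_one {n : ℕ} [NeZero n] {P : Fin n → Prop} {i j : Fin n}
    (hi : P i) (hj : ¬ P j) : ∃ a, P a ∧ ¬ P (a + 1) := by
  by_contra! h
  have hk : ∀ k : ℕ, P (i + (k : Fin n)) := fun k => by
    induction k with
    | zero => simpa using hi
    | succ k ih => simpa [Nat.cast_succ, add_assoc] using h _ ih
  exact hj (by simpa using hk (j - i).val)

lemma List.finite_setOf_forall_mem_length_le {α : Type*} {s : Set α} (hs : s.Finite) (n : ℕ) :
    {l : List α | (∀ x ∈ l, x ∈ s) ∧ l.length ≤ n}.Finite := by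
  have := hs.to_subtype
  refine ((List.finite_length_le s n).image (List.map Subtype.val)).subset ?_
  rintro l ⟨hl, hn⟩
  exact ⟨l.pmap Subtype.mk hl, by simpa using hn, by simp [List.map_pmap]⟩

lemma l1Z_add_le {α : Type} (a b : α →₀ ℤ) : l1Z (a + b) ≤ l1Z a + l1Z b := by
  classical
  unfold l1Z
  rw [sum_of_support_subset _ support_add _ fun _ _ => rfl,
    sum_of_support_subset a Finset.subset_union_left _ fun _ _ => rfl,
    sum_of_support_subset b Finset.subset_union_right _ fun _ _ => rfl,
    ← Finset.sum_add_distrib]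
  exact Finset.sum_le_sum fun x _ => Int.natAbs_add_le _ _

lemma l1Z_single {α : Type} (x : α) (c : ℤ) : l1Z (single x c) = c.natAbs :=
  sum_single_index rfl

lemma card_support_le_l1Z {α : Type} (c : α →₀ ℤ) : c.support.card ≤ l1Z c := by
  rw [Finset.card_eq_sum_ones]
  exact Finset.sum_le_sum fun x hx => Int.natAbs_pos.2 (mem_support_iff.1 hx)

namespace CGraph

variable {Γ : CGraph}

lemma d1_eq_linearCombination (γ : Γ.E →₀ ℤ) :
    Γ.d1 γ = linearCombination ℤ (fun e => single (Γ.ends e).2 (1 : ℤ) - single (Γ.ends e).1 1) γ :=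
  (linearCombination_apply _ _).symm

lemma d1_add (a b : Γ.E →₀ ℤ) : Γ.d1 (a + b) = Γ.d1 a + Γ.d1 b := by
  simp only [d1_eq_linearCombination, map_add]

lemma d1_single_sign (p : Γ.E × Bool) :
    Γ.d1 (single p.1 (if p.2 then 1 else -1)) = single (Γ.tgt p) 1 - single (Γ.src p) 1 := by
  obtain ⟨e, _ | _⟩ := p <;> simp [d1_eq_linearCombination, src, tgt]

lemma pathCycle_nil : Γ.pathCycle [] = 0 := rfl

lemma pathCycle_cons (p : Γ.E × Bool) (l : List (Γ.E × Bool)) :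
    Γ.pathCycle (p :: l) = single p.1 (if p.2 then 1 else -1) + Γ.pathCycle l := by
  simp [pathCycle]

lemma pathCycle_filter (l : List (Γ.E × Bool)) (q : Γ.E → Prop) [DecidablePred q] :
    Γ.pathCycle (l.filter fun p => q p.1) = (Γ.pathCycle l).filter q := by
  induction l with
  | nil => simp [pathCycle_nil, Finsupp.filter_zero]
  | cons p l ih =>
    by_cases hq : q p.1 <;> simp [hq, pathCycle_cons, filter_add, ih,
      filter_single_of_pos, filter_single_of_neg]

lemma pathCycle_apply_of_notMem {l : List (Γ.E × Bool)} {e : Γ.E} (he : e ∉ l.map Prod.fst) :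
    Γ.pathCycle l e = 0 := by
  induction l with
  | nil => rfl
  | cons p l ih =>
    simp only [List.map_cons, List.mem_cons, not_or] at he
    rw [pathCycle_cons, Finsupp.add_apply, ih he.2, single_eq_of_ne he.1, add_zero]

lemma pathCycle_apply_of_mem {l : List (Γ.E × Bool)} (hl : (l.map Prod.fst).Nodup)
    {p : Γ.E × Bool} (hp : p ∈ l) : Γ.pathCycle l p.1 = if p.2 then 1 else -1 := by
  induction l with
  | nil => cases hp
  | cons q l ih =>
    rw [List.map_cons, List.nodup_cons] at hl
    rw [pathCycle_cons, Finsupp.add_apply]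
    rcases List.mem_cons.1 hp with rfl | hp
    · rw [pathCycle_apply_of_notMem hl.1, single_eq_same, add_zero]
    · have hne : q.1 ≠ p.1 := fun h => hl.1 (h ▸ List.mem_map_of_mem hp)
      rw [single_eq_of_ne' hne, zero_add, ih hl.2 hp]

lemma pathCycle_apply_ne_zero {l : List (Γ.E × Bool)} (hl : (l.map Prod.fst).Nodup) {e : Γ.E}
    (he : e ∈ l.map Prod.fst) : Γ.pathCycle l e ≠ 0 := by
  obtain ⟨p, hp, rfl⟩ := List.mem_map.1 he
  rw [pathCycle_apply_of_mem hl hp]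
  split_ifs <;> decide

lemma l1Z_pathCycle_le (l : List (Γ.E × Bool)) : l1Z (Γ.pathCycle l) ≤ l.length := by
  induction l with
  | nil => simp [pathCycle_nil, l1Z]
  | cons p l ih =>
    have hp : l1Z (single p.1 (if p.2 then (1 : ℤ) else -1)) ≤ 1 := by
      rw [l1Z_single]; split_ifs <;> rfl
    rw [pathCycle_cons, List.length_cons]
    exact (l1Z_add_le _ _).trans (by omega)

lemma d1_pathCycle_apply [DecidableEq Γ.V] (l : List (Γ.E × Bool)) (v : Γ.V) :
    Γ.d1 (Γ.pathCycle l) v = ((l.map Γ.tgt).count v : ℤ) - (l.map Γ.src).count v := by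
  induction l with
  | nil => simp [pathCycle_nil, d1_eq_linearCombination]
  | cons p l ih =>
    rw [pathCycle_cons, d1_add, d1_single_sign, Finsupp.add_apply, ih]
    simp only [Finsupp.sub_apply, single_apply, List.map_cons, List.count_cons, beq_iff_eq]
    split_ifs <;> push_cast <;> ring

namespace IsClosedPath

variable {l : List (Γ.E × Bool)}

lemma map_tgt_eq_rotate (hl : Γ.IsClosedPath l) : l.map Γ.tgt = (l.map Γ.src).rotate 1 := by
  refine List.ext_getElem (by simp) fun k hk _ => ?_
  simpa [List.getElem_rotate] using hl.2 ⟨k, by simpa using hk⟩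

lemma isCycle_pathCycle (hl : Γ.IsClosedPath l) : Γ.IsCycle (Γ.pathCycle l) := by
  classical
  ext v
  rw [d1_pathCycle_apply, hl.map_tgt_eq_rotate, ((l.map Γ.src).rotate_perm 1).count_eq]
  simp

lemma tgt_get [NeZero l.length] (hl : Γ.IsClosedPath l) (a : Fin l.length) :
    Γ.tgt (l.get a) = Γ.src (l.get (a + 1)) := by
  convert hl.2 a using 4
  simp [Fin.val_add, Nat.add_mod_mod]

/-- A circuit has no proper nonzero subcycle. -/
theorem apply_ne_zero_of_disjoint (hl : Γ.IsClosedPath l) (hsrc : (l.map Γ.src).Nodup)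
    {γ₁ γ₂ : Γ.E →₀ ℤ} (hcyc : Γ.IsCycle γ₁) (hdisj : DisjointChains γ₁ γ₂)
    (hsum : γ₁ + γ₂ = Γ.pathCycle l) {e : Γ.E} (he : γ₁ e ≠ 0) :
    ∀ p ∈ l, γ₁ p.1 ≠ 0 := by
  classical
  have : NeZero l.length := ⟨(List.length_pos_iff.2 hl.1).ne'⟩
  set l₁ := l.filter fun p => γ₁ p.1 ≠ 0
  have hγ₁ : γ₁ = Γ.pathCycle l₁ := by
    rw [pathCycle_filter l (fun x => γ₁ x ≠ 0), ← hsum]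
    ext x
    rw [filter_apply]
    split_ifs with hx
    · rw [Finsupp.add_apply, (hdisj x).resolve_left hx, add_zero]
    · exact not_not.1 hx
  obtain ⟨i, hi⟩ : ∃ i, γ₁ (l.get i).1 ≠ 0 := by
    have he₁ : e ∈ l₁.map Prod.fst := by
      by_contra h
      exact he (hγ₁ ▸ pathCycle_apply_of_notMem h)
    obtain ⟨q, hq, rfl⟩ := List.mem_map.1 he₁
    obtain ⟨i, rfl⟩ := List.mem_iff_get.1 (List.mem_filter.1 hq).1
    exact ⟨i, he⟩
  intro p hp hj
  obtain ⟨j, rfl⟩ := List.mem_iff_get.1 hp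
  obtain ⟨a, ha, ha₁⟩ :=
    Fin.exists_and_not_add_one (P := fun k => γ₁ (l.get k).1 ≠ 0) hi (not_not.2 hj)
  -- At `v` the edge `l[a]` of `γ₁` arrives, but `l[a+1]`, the only edge of `l` leaving `v`,
  -- is not in `γ₁`: so `γ₁` has nonzero boundary at `v`.
  set v := Γ.src (l.get (a + 1))
  have htgt : 0 < (l₁.map Γ.tgt).count v :=
    List.count_pos_iff.2 (List.mem_map.2
      ⟨l.get a, List.mem_filter.2 ⟨List.get_mem _ _, by simpa using ha⟩, hl.tgt_get a⟩)
  have hsrc₁ : (l₁.map Γ.src).count v = 0 := List.count_eq_zero.2 fun hv => by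
    obtain ⟨q, hq, hqv⟩ := List.mem_map.1 hv
    rw [List.mem_filter] at hq
    rw [List.inj_on_of_nodup_map hsrc hq.1 (List.get_mem _ _) hqv] at hq
    exact ha₁ (by simpa using hq.2)
  have hv := DFunLike.congr_fun hcyc v
  rw [hγ₁, d1_pathCycle_apply, hsrc₁] at hv
  simp only [Nat.cast_zero, sub_zero, coe_zero, Pi.zero_apply, Nat.cast_eq_zero] at hv
  omega

end IsClosedPath

end CGraph

namespace TwoComplex

variable {X : TwoComplex}

lemma d2_eq_linearCombination (μ : X.F →₀ ℤ) : X.d2 μ = linearCombination ℤ X.fb μ :=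
  (linearCombination_apply _ _).symm

lemma d2_add (μ ν : X.F →₀ ℤ) : X.d2 (μ + ν) = X.d2 μ + X.d2 ν := by
  simp only [d2_eq_linearCombination, map_add]

lemma isCycle_d2 (hbd : ∀ f : X.F, X.d1 (X.fb f) = 0) (μ : X.F →₀ ℤ) : X.IsCycle (X.d2 μ) := by
  rw [CGraph.IsCycle, d2_eq_linearCombination, linearCombination_apply,
    CGraph.d1_eq_linearCombination, map_finsuppSum]
  exact Finset.sum_eq_zero fun f _ => by
    simp only [map_smul, ← CGraph.d1_eq_linearCombination, hbd, smul_zero]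

lemma exists_ne_zero_of_d2_apply_ne_zero {μ : X.F →₀ ℤ} {e : X.E} (h : X.d2 μ e ≠ 0) :
    ∃ f, μ f ≠ 0 ∧ X.fb f e ≠ 0 := by
  rw [TwoComplex.d2, Finsupp.sum_apply] at h
  obtain ⟨f, hf, hfe⟩ := Finset.exists_ne_zero_of_sum_ne_zero h
  exact ⟨f, mem_support_iff.1 hf, fun h => hfe (by simp [h])⟩

def ShareEdge (f g : X.F) : Prop := ∃ e, X.fb f e ≠ 0 ∧ X.fb g e ≠ 0

lemma finite_setOf_shareEdge (hadj : ∀ e : X.E, {f : X.F | X.fb f e ≠ 0}.Finite) (f : X.F) :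
    {g | X.ShareEdge f g}.Finite :=
  ((X.fb f).support.finite_toSet.biUnion fun e _ => hadj e).subset
    fun _ ⟨_, hfe, hge⟩ => Set.mem_biUnion (mem_support_iff.2 hfe) hge

/-- `ν₁` consists of the faces of `μ` linked to the faces at `e` by chains of faces of `μ`,
consecutive ones sharing an edge. -/
theorem exists_local_part (μ : X.F →₀ ℤ) (e : X.E) :
    ∃ ν₁ ν₂, ν₁ + ν₂ = μ ∧ DisjointChains (X.d2 ν₁) (X.d2 ν₂) ∧ X.d2 ν₂ e = 0 ∧
      ∀ f, ν₁ f ≠ 0 → f ∈ reachIn X.ShareEdge {f | X.fb f e ≠ 0} (l1Z μ) := by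
  classical
  set r : X.F → X.F → Prop := fun f g => μ g ≠ 0 ∧ X.ShareEdge f g
  set s : Set X.F := {f | μ f ≠ 0 ∧ X.fb f e ≠ 0}
  set t : Set X.F := ↑μ.support
  have hsub : ∀ n, reachIn r s n ⊆ t :=
    reachIn_subset (fun _ hf => mem_support_iff.2 hf.1) fun _ _ h => mem_support_iff.2 h.1
  set C := reachIn r s t.ncard
  refine ⟨μ.filter (· ∈ C), μ.filter (· ∉ C), filter_add_filter_not _ _, fun e' => ?_, ?_,
    fun f hf => ?_⟩
  · by_contra! h
    obtain ⟨f, hf, hfe⟩ := exists_ne_zero_of_d2_apply_ne_zero h.1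
    obtain ⟨g, hg, hge⟩ := exists_ne_zero_of_d2_apply_ne_zero h.2
    rw [filter_apply, ite_ne_right_iff] at hf hg
    exact hg.1 (mem_reachIn_ncard_of_rel μ.support.finite_toSet hsub hf.1 ⟨hg.2, e', hfe, hge⟩)
  · by_contra h
    obtain ⟨g, hg, hge⟩ := exists_ne_zero_of_d2_apply_ne_zero h
    rw [filter_apply, ite_ne_right_iff] at hg
    exact hg.1 (monotone_reachIn (Nat.zero_le _) ⟨hg.2, hge⟩)
  · rw [filter_apply, ite_ne_right_iff] at hf
    have hN : t.ncard ≤ l1Z μ := (Set.ncard_coe_finset _).trans_le (card_support_le_l1Z μ)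
    exact monotone_reachIn hN (reachIn_mono (fun _ _ h => h.2) (fun _ h => h.2) _ hf.1)

lemma exists_d2_eq_l1Z_le_FV {k : ℕ} (hk : X.FV k ≠ ⊤) {γ : X.E →₀ ℤ} (hγ : X.IsCycle γ)
    (hγk : l1Z γ ≤ k) : ∃ μ, X.d2 μ = γ ∧ l1Z μ ≤ (X.FV k).toNat := by
  have hlt : X.fillNorm γ < (X.FV k).toNat + 1 :=
    calc X.fillNorm γ ≤ X.FV k :=
          le_iSup₂ (f := fun γ (_ : γ ∈ {γ | X.IsCycle γ ∧ l1Z γ ≤ k}) => X.fillNorm γ) γ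
            ⟨hγ, hγk⟩
      _ = (X.FV k).toNat := (ENat.natCast_toNat hk).symm
      _ < (X.FV k).toNat + 1 := by exact_mod_cast Nat.lt_succ_self _
  obtain ⟨μ, hμ⟩ := iInf_lt_iff.1 hlt
  obtain ⟨hμγ, hμk⟩ := iInf_lt_iff.1 hμ
  exact ⟨μ, hμγ, Order.lt_add_one_iff.1 (by exact_mod_cast hμk)⟩

end TwoComplex

/-- If every 1-cell of a cell complex is adjacent to finitely many
2-cells and the homological Dehn function over ℤ is finite-valued, then the
1-skeleton is fine. -/
theorem fine_of_finite_FV (X : TwoComplex)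
    (hbd : ∀ f : X.F, X.toCGraph.d1 (X.fb f) = 0)
    (hadj : ∀ e : X.E, {f : X.F | X.fb f e ≠ 0}.Finite)
    (hFV : ∀ k : ℕ, X.FV k < ⊤) :
    X.toCGraph.Fine := by
  intro e L
  set S := reachIn X.ShareEdge {f | X.fb f e ≠ 0} (X.FV L).toNat
  have hS : S.Finite := reachIn_finite (hadj e) (TwoComplex.finite_setOf_shareEdge hadj) _
  refine (List.finite_setOf_forall_mem_length_le
    ((hS.biUnion fun f _ => (X.fb f).support.finite_toSet).prod Set.finite_univ) L).subset ?_
  rintro l ⟨hc, he, hlen⟩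
  refine ⟨fun p hp => ⟨?_, Set.mem_univ _⟩, hlen⟩
  obtain ⟨μ, hμ, hμM⟩ := TwoComplex.exists_d2_eq_l1Z_le_FV (hFV L).ne hc.1.isCycle_pathCycle
    ((CGraph.l1Z_pathCycle_le l).trans hlen)
  obtain ⟨ν₁, ν₂, rfl, hdisj, hν₂e, hν₁⟩ := TwoComplex.exists_local_part μ e
  rw [TwoComplex.d2_add] at hμ
  have hν₁e : X.d2 ν₁ e ≠ 0 := by
    simpa [← hμ, hν₂e] using CGraph.pathCycle_apply_ne_zero hc.2.1 he
  obtain ⟨f, hf, hfp⟩ := TwoComplex.exists_ne_zero_of_d2_apply_ne_zero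
    (hc.1.apply_ne_zero_of_disjoint hc.2.2 (TwoComplex.isCycle_d2 hbd ν₁) hdisj hμ hν₁e p hp)
  exact Set.mem_biUnion (monotone_reachIn hμM (hν₁ f hf)) (mem_support_iff.2 hfp)
end

section
/- Let Γ be a fine graph equipped with a cocompact G-action (finitely many orbits of edges). Then for each positive integer n, the G-action on the set of circuits of Γ of length at most n has only finitely many orbits. -/
open Finsupp

/-- An action of a group `G` on a graph `Γ` by graph automorphisms. -/
structure GraphAction (G : Type) [Group G] (Γ : CGraph) where
  vMap : G → Γ.V ≃ Γ.V
  eMap : G → Γ.E ≃ Γ.E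
  vMap_mul : ∀ g h v, vMap (g * h) v = vMap g (vMap h v)
  eMap_mul : ∀ g h e, eMap (g * h) e = eMap g (eMap h e)
  ends_eq : ∀ g e, Γ.ends (eMap g e) = (vMap g (Γ.ends e).1, vMap g (Γ.ends e).2)

namespace GraphAction

variable {G : Type} [Group G] {Γ : CGraph} (A : GraphAction G Γ) (g : G)

lemma src_map (p : Γ.E × Bool) : Γ.src (A.eMap g p.1, p.2) = A.vMap g (Γ.src p) := by
  obtain ⟨e, b⟩ := p
  cases b <;> simp [CGraph.src, A.ends_eq]

lemma tgt_map (p : Γ.E × Bool) : Γ.tgt (A.eMap g p.1, p.2) = A.vMap g (Γ.tgt p) := by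
  obtain ⟨e, b⟩ := p
  cases b <;> simp [CGraph.tgt, A.ends_eq]

variable {l : List (Γ.E × Bool)}

lemma isClosedPath_map (hl : Γ.IsClosedPath l) :
    Γ.IsClosedPath (l.map fun p => (A.eMap g p.1, p.2)) := by
  obtain ⟨hne, hcl⟩ := hl
  refine ⟨by simpa using hne, fun i => ?_⟩
  have hlen : (l.map fun p => (A.eMap g p.1, p.2)).length = l.length := List.length_map _
  have := hcl ⟨i, hlen ▸ i.isLt⟩
  simp only [List.get_eq_getElem, List.getElem_map, hlen] at this ⊢
  rw [A.tgt_map, A.src_map, this]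

lemma isCircuit_map (hl : Γ.IsCircuit l) :
    Γ.IsCircuit (l.map fun p => (A.eMap g p.1, p.2)) := by
  obtain ⟨hclosed, hedges, hverts⟩ := hl
  refine ⟨A.isClosedPath_map g hclosed, ?_, ?_⟩
  · have hfst : ((l.map fun p => (A.eMap g p.1, p.2)).map Prod.fst)
        = (l.map Prod.fst).map (A.eMap g) := by
      simp only [List.map_map, Function.comp_def]
    rw [hfst]
    exact hedges.map (A.eMap g).injective
  · have hsrc : ((l.map fun p => (A.eMap g p.1, p.2)).map Γ.src)
        = (l.map Γ.src).map (A.vMap g) := by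
      simp only [List.map_map]
      exact List.map_congr_left fun p _ => A.src_map g p
    rw [hsrc]
    exact hverts.map (A.vMap g).injective

end GraphAction

lemma CGraph.Fine.finite_circuits_through {Γ : CGraph} (hfine : Γ.Fine) {s : Set Γ.E}
    (hs : s.Finite) (n : ℕ) :
    {l : List (Γ.E × Bool) | Γ.IsCircuit l ∧ l.length ≤ n ∧ ∃ e ∈ s, e ∈ l.map Prod.fst}.Finite :=
  (hs.biUnion fun e _ => hfine e n).subset fun _ ⟨hc, hlen, _, hes, hel⟩ =>
    Set.mem_biUnion hes ⟨hc, hel, hlen⟩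

/-- If a fine graph admits a cocompact G-action (finitely many orbits
of edges), then for each n the induced action on circuits of length at most n has
finitely many orbits. -/
theorem finitely_many_circuit_orbits (G : Type) [Group G] (Γ : CGraph)
    (A : GraphAction G Γ) (hfine : Γ.Fine)
    (hcc : ∃ s : Set Γ.E, s.Finite ∧ ∀ e : Γ.E, ∃ g : G, A.eMap g e ∈ s) :
    ∀ n : ℕ, ∃ s : Set (List (Γ.E × Bool)), s.Finite ∧
      ∀ l : List (Γ.E × Bool), Γ.IsCircuit l → l.length ≤ n →
        ∃ g : G, (l.map fun p => (A.eMap g p.1, p.2)) ∈ s := by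
  obtain ⟨s, hs, hrep⟩ := hcc
  intro n
  refine ⟨_, hfine.finite_circuits_through hs n, fun l hl hlen => ?_⟩
  obtain ⟨p, hp⟩ := List.exists_mem_of_ne_nil l hl.1.1
  obtain ⟨g, hg⟩ := hrep p.1
  refine ⟨g, A.isCircuit_map g hl, by simpa using hlen, A.eMap g p.1, hg, ?_⟩
  simpa only [List.map_map, Function.comp_def] using
    List.mem_map_of_mem (f := fun p => A.eMap g p.1) hp
end
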